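/- In the random intersection graph G(n,m,F) with m = ⌊βn^α⌋ and p_i = min(γ W_i n^{-(1+α)/2}, 1), if F has finite mean, then the expected number D'' of neighbors of vertex 1 whose weight exceeds n^{1/4} satisfies E[D''] ≤ βγ(γE[W·1{W > n^{1/4}}] + n^{(1+α)/2}·P(γW ≥ n^{(1+α)/2})), and in particular E[D''] → 0 as n → ∞. -/

import Mathlib

open MeasureTheory ProbabilityTheory Filter Real

noncomputable section

/-- Bernoulli measure on `Bool` with success probability `p` (clamped into `[0,1]`). -/
def bern (p : ℝ) : Measure Bool :=
  (PMF.bernoulli (Real.toNNReal (min p 1))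
    (Real.toNNReal_le_one.mpr (min_le_right _ _))).toMeasure

instance bern.isProbabilityMeasure (p : ℝ) : IsProbabilityMeasure (bern p) := by
  unfold bern; infer_instance

/-- The (conditional) law of the bipartite graph `B(n,m,·)` given the group-membership
probabilities `p i` of the `n` vertices: vertex `i` is joined to each of the `m` groups
independently with probability `p i`. -/
def bipLaw (n m : ℕ) (p : Fin n → ℝ) : Measure (Fin n → Fin m → Bool) :=
  Measure.pi fun i => Measure.pi fun _ : Fin m => bern (p i)

instance bipLaw.isProbabilityMeasure (n m : ℕ) (p : Fin n → ℝ) :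
    IsProbabilityMeasure (bipLaw n m p) := by
  unfold bipLaw; infer_instance

/-- The number of groups, `m = ⌊β n^α⌋`. -/
def numGroups (β α : ℝ) (n : ℕ) : ℕ := ⌊β * (n : ℝ) ^ α⌋₊

/-- The group-membership probability `p_i = min(γ w n^{-(1+α)/2}, 1)` of a vertex
with weight `w`. -/
def pw (γ α : ℝ) (n : ℕ) (w : ℝ) : ℝ := min (γ * w * (n : ℝ) ^ (-(1 + α) / 2)) 1

/-- Two distinct vertices are adjacent in the random intersection graph iff they share
at least one group in the bipartite graph. -/
def Adj {n m : ℕ} (B : Fin n → Fin m → Bool) (i j : Fin n) : Prop :=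
  ∃ a : Fin m, B i a ∧ B j a

/-- The degree of vertex `i` in the random intersection graph determined by the
bipartite graph `B`. -/
def deg {n m : ℕ} (B : Fin n → Fin m → Bool) (i : Fin n) : ℕ :=
  Set.ncard {j | j ≠ i ∧ Adj B i j}

/-- The expected number `E[D'']` of neighbors of vertex `0` in `G(n,m,F)` whose weight
exceeds `n^{1/4}`, all the weights being i.i.d. with law `F`. -/
def expDegBig (α β γ : ℝ) (F : Measure ℝ) (n : ℕ) : ℝ :=
  if h : n ≠ 0 then
    haveI : NeZero n := ⟨h⟩
    ∫ v : Fin n → ℝ,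
      (∫ B, ((Set.ncard {j : Fin n | j ≠ 0 ∧ (n : ℝ) ^ ((1 : ℝ) / 4) < v j ∧ Adj B 0 j} : ℕ) : ℝ)
        ∂ bipLaw n (numGroups β α n) fun i => pw γ α n (v i))
      ∂ Measure.pi fun _ : Fin n => F
  else 0

/-!
Given the weights, the rows of the bipartite graph are independent, so vertices `0` and `j ≠ 0`
both join a fixed group with probability `p₀ pⱼ`, and a union bound over the `m` groups gives
`P(0 ~ j) ≤ m p₀ pⱼ ≤ m γ² n^{-(1+α)} W₀ Wⱼ`. Summing over the `j` with `Wⱼ > n^{1/4}` and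
integrating over the independent weights,
`E[D''] ≤ n m γ² n^{-(1+α)} E[W] E[W 1{W > n^{1/4}}] ≤ β γ² E[W 1{W > n^{1/4}}]`,
and this tail integral tends to `0` because `W` is integrable.
-/

section Pi

variable {ι : Type*} [Fintype ι] {α : ι → Type*} [∀ i, MeasurableSpace (α i)]
  (μ : ∀ i, Measure (α i)) [∀ i, IsProbabilityMeasure (μ i)] {i j : ι}

lemma indepFun_eval_pi (hij : i ≠ j) :
    IndepFun (fun x : ∀ k, α k => x i) (fun x => x j) (Measure.pi μ) :=
  (iIndepFun_pi (X := fun _ => id) fun _ => aemeasurable_id).indepFun hij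

lemma measure_pi_eval_mem_inter (hij : i ≠ j) {s : Set (α i)} {t : Set (α j)}
    (hs : MeasurableSet s) (ht : MeasurableSet t) :
    Measure.pi μ ({x | x i ∈ s} ∩ {x | x j ∈ t}) = μ i s * μ j t := by
  rw [← (measurePreserving_eval μ i).measure_preimage hs.nullMeasurableSet,
    ← (measurePreserving_eval μ j).measure_preimage ht.nullMeasurableSet]
  exact (indepFun_eval_pi μ hij).measure_inter_preimage_eq_mul _ _ hs ht

lemma integral_pi_eval_mul_eval (hij : i ≠ j) {f : α i → ℝ} {g : α j → ℝ}
    (hf : AEStronglyMeasurable f (μ i)) (hg : AEStronglyMeasurable g (μ j)) :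
    ∫ x, f (x i) * g (x j) ∂Measure.pi μ = (∫ y, f y ∂μ i) * ∫ y, g y ∂μ j := by
  rw [(indepFun_eval_pi μ hij).integral_fun_comp_mul_comp (measurable_pi_apply i).aemeasurable
    (measurable_pi_apply j).aemeasurable ((measurePreserving_eval μ i).map_eq ▸ hf)
    ((measurePreserving_eval μ j).map_eq ▸ hg), integral_comp_eval hf, integral_comp_eval hg]

lemma integrable_pi_eval_mul_eval (hij : i ≠ j) {f : α i → ℝ} {g : α j → ℝ}
    (hf : Integrable f (μ i)) (hg : Integrable g (μ j)) :
    Integrable (fun x => f (x i) * g (x j)) (Measure.pi μ) :=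
  ((indepFun_eval_pi μ hij).comp₀ (measurable_pi_apply i).aemeasurable
    (measurable_pi_apply j).aemeasurable
    ((measurePreserving_eval μ i).map_eq ▸ hf.aemeasurable)
    ((measurePreserving_eval μ j).map_eq ▸ hg.aemeasurable)).integrable_mul
    (integrable_comp_eval hf) (integrable_comp_eval hg)

end Pi

lemma bern_singleton_true (p : ℝ) : bern p {true} = ENNReal.ofReal (min p 1) := by
  rw [bern, PMF.toMeasure_apply_singleton _ _ (by trivial)]
  rfl

lemma bipLaw_both_mem_group {n m : ℕ} (p : Fin n → ℝ) {i j : Fin n} (hij : i ≠ j) (a : Fin m) :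
    bipLaw n m p {B | B i a = true ∧ B j a = true} =
      ENNReal.ofReal (min (p i) 1) * ENNReal.ofReal (min (p j) 1) := by
  have hrow (k : Fin n) : (Measure.pi fun _ : Fin m => bern (p k)) {f | f a = true} =
      ENNReal.ofReal (min (p k) 1) := by
    rw [← bern_singleton_true]
    exact (measurePreserving_eval (fun _ : Fin m => bern (p k)) a).measure_preimage
      (measurableSet_singleton true).nullMeasurableSet
  rw [bipLaw, ← hrow i, ← hrow j]
  exact measure_pi_eval_mem_inter (fun k => Measure.pi fun _ : Fin m => bern (p k)) hij
    (s := {f | f a = true}) (t := {f | f a = true}) .of_discrete .of_discrete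

lemma measureReal_bipLaw_adj_le {n m : ℕ} {p : Fin n → ℝ} {i j : Fin n} (hij : i ≠ j)
    (hi : 0 ≤ p i) (hj : 0 ≤ p j) :
    (bipLaw n m p).real {B | Adj B i j} ≤ m * (p i * p j) := by
  have hunion : {B : Fin n → Fin m → Bool | Adj B i j} =
      ⋃ a, {B | B i a = true ∧ B j a = true} := by
    ext B; simp [Adj]
  have hclamp (k : Fin n) (hk : 0 ≤ p k) : (ENNReal.ofReal (min (p k) 1)).toReal ≤ p k := by
    rw [ENNReal.toReal_ofReal (le_min hk zero_le_one)]
    exact min_le_left _ _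
  calc (bipLaw n m p).real {B | Adj B i j}
      ≤ ∑ a : Fin m, (bipLaw n m p).real {B | B i a = true ∧ B j a = true} := by
        rw [hunion]; exact measureReal_iUnion_fintype_le _
    _ = m * ((ENNReal.ofReal (min (p i) 1)).toReal * (ENNReal.ofReal (min (p j) 1)).toReal) := by
        simp [measureReal_def, bipLaw_both_mem_group p hij]
    _ ≤ m * (p i * p j) := by
        gcongr
        · exact hclamp i hi
        · exact hclamp j hj

lemma integral_ncard_setOf_mem {Ω ι : Type*} [MeasurableSpace Ω] [Fintype ι] (μ : Measure Ω)
    [IsFiniteMeasure μ] (A : ι → Set Ω) (hA : ∀ j, MeasurableSet (A j)) :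
    ∫ ω, ((Set.ncard {j | ω ∈ A j} : ℕ) : ℝ) ∂μ = ∑ j, μ.real (A j) := by
  classical
  have hcount (ω : Ω) : ((Set.ncard {j | ω ∈ A j} : ℕ) : ℝ) = ∑ j, (A j).indicator 1 ω := by
    rw [Set.ncard_eq_toFinset_card', Set.toFinset_ofPred, Finset.card_filter]
    push_cast
    simp [Set.indicator_apply]
  simp_rw [hcount]
  rw [integral_finsetSum _ fun j _ => (integrable_const 1).indicator (hA j)]
  simp_rw [integral_indicator_one (hA _)]

lemma natCast_mul_numGroups_mul_sq_le {β : ℝ} (hβ : 0 ≤ β) (α γ : ℝ) (n : ℕ) :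
    (n : ℝ) * (numGroups β α n * (γ * (n : ℝ) ^ (-(1 + α) / 2)) ^ 2) ≤ β * γ ^ 2 := by
  rcases Nat.eq_zero_or_pos n with rfl | hn
  · simpa using by positivity
  have hn' : (0 : ℝ) < n := by exact_mod_cast hn
  have hm : (numGroups β α n : ℝ) ≤ β * (n : ℝ) ^ α := Nat.floor_le (by positivity)
  have hcancel : (n : ℝ) * (n : ℝ) ^ α * ((n : ℝ) ^ (-(1 + α) / 2)) ^ 2 = 1 := by
    rw [← Real.rpow_natCast, ← Real.rpow_mul hn'.le]
    nth_rewrite 1 [← Real.rpow_one (n : ℝ)]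
    rw [← Real.rpow_add hn', ← Real.rpow_add hn']
    norm_num
  calc (n : ℝ) * (numGroups β α n * (γ * (n : ℝ) ^ (-(1 + α) / 2)) ^ 2)
      ≤ (n : ℝ) * (β * (n : ℝ) ^ α * (γ * (n : ℝ) ^ (-(1 + α) / 2)) ^ 2) := by gcongr
    _ = β * γ ^ 2 := by linear_combination β * γ ^ 2 * hcancel

lemma tendsto_setIntegral_Ioi_atTop {μ : Measure ℝ} {f : ℝ → ℝ} (hf : Integrable f μ) :
    Tendsto (fun t => ∫ x in Set.Ioi t, f x ∂μ) atTop (nhds 0) := by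
  have h := tendsto_setIntegral_of_antitone (μ := μ) (f := f) (fun t => measurableSet_Ioi)
    (fun _ _ hst => Set.Ioi_subset_Ioi hst) ⟨0, hf.integrableOn⟩
  have hempty : ⋂ t : ℝ, Set.Ioi t = ∅ := Set.iInter_eq_empty_iff.2 fun x => ⟨x, lt_irrefl x⟩
  rwa [hempty, Measure.restrict_empty, integral_zero_measure] at h

lemma pw_nonneg {γ : ℝ} (hγ : 0 ≤ γ) (α : ℝ) (n : ℕ) {w : ℝ} (hw : 0 ≤ w) : 0 ≤ pw γ α n w :=
  le_min (by positivity) zero_le_one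

lemma pw_le (γ α : ℝ) (n : ℕ) (w : ℝ) : pw γ α n w ≤ γ * (n : ℝ) ^ (-(1 + α) / 2) * w :=
  (min_le_left _ _).trans_eq (mul_right_comm _ _ _)

lemma integral_ncard_bigNeighbors_le {γ c : ℝ} (hγ : 0 ≤ γ) (α : ℝ) {n : ℕ} [NeZero n] (m : ℕ)
    (v : Fin n → ℝ) (hv : 0 ≤ v 0) (hc : 0 ≤ c) :
    ∫ B, ((Set.ncard {j : Fin n | j ≠ 0 ∧ c < v j ∧ Adj B 0 j} : ℕ) : ℝ)
        ∂bipLaw n m (fun i => pw γ α n (v i)) ≤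
      ∑ j ∈ Finset.univ.erase 0,
        m * (γ * (n : ℝ) ^ (-(1 + α) / 2)) ^ 2 * (v 0 * (Set.Ioi c).indicator id (v j)) := by
  refine (integral_ncard_setOf_mem _ (fun j => {B | j ≠ 0 ∧ c < v j ∧ Adj B 0 j})
    fun _ => .of_discrete).trans_le ?_
  rw [← Finset.sum_erase (a := 0) _ (by simp)]
  refine Finset.sum_le_sum fun j hj => ?_
  have hj0 : j ≠ 0 := Finset.ne_of_mem_erase hj
  by_cases hcj : c < v j
  · have hvj : 0 ≤ v j := hc.trans hcj.le
    simp only [ne_eq, hj0, not_false_eq_true, hcj, true_and,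
      Set.indicator_of_mem (Set.mem_Ioi.2 hcj), id]
    calc (bipLaw n m fun i => pw γ α n (v i)).real {B | Adj B 0 j}
        ≤ m * (pw γ α n (v 0) * pw γ α n (v j)) :=
          measureReal_bipLaw_adj_le hj0.symm (pw_nonneg hγ α n hv) (pw_nonneg hγ α n hvj)
      _ ≤ m * ((γ * (n : ℝ) ^ (-(1 + α) / 2) * v 0) * (γ * (n : ℝ) ^ (-(1 + α) / 2) * v j)) := by
          gcongr
          · exact pw_nonneg hγ α n hvj
          · exact pw_le γ α n _
          · exact pw_le γ α n _
      _ = _ := by ring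
  · simp [hcj]

lemma integral_pi_eval_zero_mul_indicator_Ioi {F : Measure ℝ} [IsProbabilityMeasure F]
    (hFint : Integrable (fun x => x) F) (hFmean : ∫ x, x ∂F = 1) {n : ℕ} [NeZero n]
    {j : Fin n} (hj : j ≠ 0) (c : ℝ) :
    ∫ v, v 0 * (Set.Ioi c).indicator id (v j) ∂Measure.pi (fun _ : Fin n => F) =
      ∫ x in Set.Ioi c, x ∂F := by
  refine (integral_pi_eval_mul_eval (fun _ : Fin n => F) hj.symm hFint.aestronglyMeasurable
    (hFint.indicator measurableSet_Ioi).aestronglyMeasurable).trans ?_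
  rw [hFmean, one_mul, integral_indicator measurableSet_Ioi]

lemma expDegBig_nonneg (α β γ : ℝ) (F : Measure ℝ) (n : ℕ) : 0 ≤ expDegBig α β γ F n := by
  unfold expDegBig
  split_ifs
  · exact integral_nonneg fun v => integral_nonneg fun B => Nat.cast_nonneg _
  · rfl

lemma expDegBig_le {α β γ : ℝ} (hβ : 0 ≤ β) (hγ : 0 ≤ γ) {F : Measure ℝ} [IsProbabilityMeasure F]
    (hFpos : F (Set.Iic 0) = 0) (hFint : Integrable (fun x => x) F) (hFmean : ∫ x, x ∂F = 1)
    (n : ℕ) [NeZero n] :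
    expDegBig α β γ F n ≤ β * γ * (γ * ∫ x in Set.Ioi ((n : ℝ) ^ ((1 : ℝ) / 4)), x ∂F) := by
  set c := (n : ℝ) ^ ((1 : ℝ) / 4)
  set K := (numGroups β α n : ℝ) * (γ * (n : ℝ) ^ (-(1 + α) / 2)) ^ 2
  set I := ∫ x in Set.Ioi c, x ∂F
  have hc : 0 ≤ c := by positivity
  have hI : 0 ≤ I := setIntegral_nonneg measurableSet_Ioi fun x hx => hc.trans (le_of_lt hx)
  have hK : 0 ≤ K := by positivity
  have htail : Integrable ((Set.Ioi c).indicator id) F := hFint.indicator measurableSet_Ioi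
  have hpos : ∀ᵐ v ∂Measure.pi fun _ : Fin n => F, 0 ≤ v 0 := by
    refine Measure.tendsto_eval_ae_ae.eventually ?_
    filter_upwards [measure_eq_zero_iff_ae_notMem.1 hFpos] with x hx
    exact le_of_lt (not_le.1 hx)
  have hint (j : Fin n) (hj : j ∈ Finset.univ.erase 0) :
      Integrable (fun v => K * (v 0 * (Set.Ioi c).indicator id (v j)))
        (Measure.pi fun _ : Fin n => F) :=
    (integrable_pi_eval_mul_eval (fun _ : Fin n => F) (Finset.ne_of_mem_erase hj).symm hFint
      htail).const_mul K
  calc expDegBig α β γ F n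
      ≤ ∫ v, ∑ j ∈ Finset.univ.erase 0, K * (v 0 * (Set.Ioi c).indicator id (v j))
          ∂Measure.pi (fun _ : Fin n => F) := by
        rw [expDegBig, dif_pos (NeZero.ne n)]
        exact integral_mono_of_nonneg
          (ae_of_all _ fun v => integral_nonneg fun B => Nat.cast_nonneg _)
          (integrable_finsetSum _ hint)
          (hpos.mono fun v hv => integral_ncard_bigNeighbors_le hγ α _ v hv hc)
    _ = ∑ j ∈ Finset.univ.erase (0 : Fin n), K * I := by
        rw [integral_finsetSum _ hint]
        refine Finset.sum_congr rfl fun j hj => ?_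
        rw [integral_const_mul,
          integral_pi_eval_zero_mul_indicator_Ioi hFint hFmean (Finset.ne_of_mem_erase hj)]
    _ ≤ ∑ _j : Fin n, K * I :=
        Finset.sum_le_sum_of_subset_of_nonneg (Finset.erase_subset _ _) fun _ _ _ => by positivity
    _ = n * K * I := by simp only [Finset.sum_const, Finset.card_univ, Fintype.card_fin,
          nsmul_eq_mul, mul_assoc]
    _ ≤ β * γ ^ 2 * I := by
        gcongr ?_ * I
        exact natCast_mul_numGroups_mul_sq_le hβ α γ n
    _ = β * γ * (γ * I) := by ring

theorem expected_degree_big_weights_general (α β γ : ℝ) (hβ : 0 < β) (hγ : 0 < γ)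
    (F : Measure ℝ) [IsProbabilityMeasure F]
    (hFpos : F (Set.Iic 0) = 0)
    (hFint : Integrable (fun x => x) F) (hFmean : ∫ x, x ∂F = 1) :
    (∀ n : ℕ, 1 ≤ n →
        expDegBig α β γ F n ≤
          β * γ * (γ * ∫ x in {y : ℝ | (n : ℝ) ^ ((1 : ℝ) / 4) < y}, x ∂F +
            (n : ℝ) ^ ((1 + α) / 2) *
              (F {x : ℝ | (n : ℝ) ^ ((1 + α) / 2) ≤ γ * x}).toReal)) ∧
    Tendsto (expDegBig α β γ F) atTop (nhds 0) := by
  let tail (n : ℕ) : ℝ := β * γ * (γ * ∫ x in Set.Ioi ((n : ℝ) ^ ((1 : ℝ) / 4)), x ∂F)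
  have hle (n : ℕ) (hn : 1 ≤ n) : expDegBig α β γ F n ≤ tail n :=
    haveI : NeZero n := ⟨Nat.one_le_iff_ne_zero.1 hn⟩
    expDegBig_le hβ.le hγ.le hFpos hFint hFmean n
  refine ⟨fun n hn => (hle n hn).trans ?_, ?_⟩
  · exact mul_le_mul_of_nonneg_left (le_add_of_nonneg_right (by positivity)) (by positivity)
  · have htail : Tendsto tail atTop (nhds 0) := by
      simpa using ((tendsto_setIntegral_Ioi_atTop hFint).comp
        ((tendsto_rpow_atTop (by norm_num)).comp tendsto_natCast_atTop_atTop)).const_mul γ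
        |>.const_mul (β * γ)
    exact tendsto_of_tendsto_of_tendsto_of_le_of_le' tendsto_const_nhds htail
      (.of_forall (expDegBig_nonneg α β γ F)) (eventually_ge_atTop 1 |>.mono hle)

/-- In the random intersection graph `G(n,m,F)` with `m = ⌊β n^α⌋` and
`p_i = min(γ W_i n^{-(1+α)/2}, 1)`, if `F` has finite mean, then the expected number
`D''` of neighbors of vertex `1` whose weight exceeds `n^{1/4}` satisfies
`E[D''] ≤ β γ (γ E[W·1{W > n^{1/4}}] + n^{(1+α)/2} P(γ W ≥ n^{(1+α)/2}))`, and in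
particular `E[D''] → 0` as `n → ∞`. -/
theorem expected_degree_big_weights (α β γ : ℝ) (hα : 0 < α) (hβ : 0 < β) (hγ : 0 < γ)
    (F : Measure ℝ) [IsProbabilityMeasure F]
    (hFpos : F (Set.Iic 0) = 0)
    (hFint : Integrable (fun x => x) F) (hFmean : ∫ x, x ∂F = 1) :
    (∀ n : ℕ, 1 ≤ n →
        expDegBig α β γ F n ≤
          β * γ * (γ * ∫ x in {y : ℝ | (n : ℝ) ^ ((1 : ℝ) / 4) < y}, x ∂F +
            (n : ℝ) ^ ((1 + α) / 2) *
              (F {x : ℝ | (n : ℝ) ^ ((1 + α) / 2) ≤ γ * x}).toReal)) ∧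
    Tendsto (expDegBig α β γ F) atTop (nhds 0) :=
  expected_degree_big_weights_general α β γ hβ hγ F hFpos hFint hFmean
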